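/- arXiv:2512.13149 — 3 statements merged into one kernel-verified Lean document; each statement's English description precedes it below -/
import Mathlib

section
/- Fix positive integers N, D and k, and let A be an N × N real matrix that is symmetric, has zero diagonal, and every entry equal to 0 or 1 (the adjacency matrix of a simple graph on N vertices). Let Ã = A + I. Let μ be the product probability measure on functions Fin N × Fin D → ℝ in which every coordinate is an independent standard real Gaussian gaussianReal 0 1, and for a sample x let X(x) denote the corresponding N × D real matrix. Define H^{(k)}(x) = Ã^k · X(x). Then the expected squared Frobenius norm ∫ ‖H^{(k)}(x) · H^{(k)}(x)ᵀ‖_F² dμ(x) equals D · Σ_{i,j=1}^{N} [ (D+1) · ((Ã^{2k})_{ij})² + (Ã^{2k})_{ii} · (Ã^{2k})_{jj} ]. -/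
open MeasureTheory ProbabilityTheory Matrix

/-- Squared Frobenius norm of a real matrix: `‖M‖_F² = Σ_{i,j} M_{ij}²`. -/
noncomputable def frobSq {m n : Type*} [Fintype m] [Fintype n]
    (M : Matrix m n ℝ) : ℝ :=
  ∑ i, ∑ j, (M i j) ^ 2

/-!
Each entry `H_{id} = Σ_a (Ãᵏ)_{ia} X_{ad}` is a linear form in the i.i.d. standard Gaussian
entries of `X`, and `‖HHᵀ‖_F² = Σ_{i,j,d,e} H_{id} H_{jd} H_{ie} H_{je}`. By Isserlis' theorem the
expectation of a product of four such forms is the sum over the three pairings of products of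
covariances, and `E[H_{id} H_{je}] = δ_{de} C_{ij}` with `C = Ãᵏ (Ãᵏ)ᵀ = Ã^{2k}` since `Ã` is
symmetric. Summing the pairings over `d, e` gives `D² C_{ij}² + D C_{ii} C_{jj} + D C_{ij}²`.
Isserlis' theorem for linear forms reduces to coordinate monomials, where it only needs the
moments `E[t] = 0`, `E[t²] = 1`, `E[t³] = 0`, `E[t⁴] = 3`; these follow from the Gaussian
integration by parts `E[t^{n+2}] = (n+1) E[t^n]`.
-/

open Finset
open scoped NNReal Kronecker

section GaussianMoments

lemma hasDerivAt_gaussianPDFReal_zero (v : ℝ≥0) (x : ℝ) :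
    HasDerivAt (gaussianPDFReal 0 v) (-(x / v) * gaussianPDFReal 0 v x) x := by
  have h : HasDerivAt (fun y : ℝ => -y ^ 2 / (2 * v)) (-(x / v)) x :=
    ((hasDerivAt_pow 2 x).neg.div_const (2 * (v : ℝ))).congr_deriv (by ring)
  simp only [gaussianPDFReal_def, sub_zero]
  exact (h.exp.const_mul _).congr_deriv (by ring)

lemma integrable_pow_gaussianReal (μ : ℝ) (v : ℝ≥0) (n : ℕ) :
    Integrable (fun x : ℝ => x ^ n) (gaussianReal μ v) :=
  (memLp_id_gaussianReal (μ := μ) (v := v) n).integrable_norm_pow'.mono' (by fun_prop)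
    (.of_forall fun x => (norm_pow x n).le)

lemma integrable_gaussianPDFReal_mul_pow (μ : ℝ) {v : ℝ≥0} (hv : v ≠ 0) (n : ℕ) :
    Integrable (fun x : ℝ => gaussianPDFReal μ v x * x ^ n) := by
  have h := integrable_pow_gaussianReal μ v n
  rw [gaussianReal_of_var_ne_zero μ hv, gaussianPDF_def, integrable_withDensity_iff_integrable_smul'
    (by fun_prop) (.of_forall fun _ => ENNReal.ofReal_lt_top)] at h
  simpa [ENNReal.toReal_ofReal (gaussianPDFReal_nonneg μ v _)] using h

theorem integral_pow_add_two_gaussianReal {v : ℝ≥0} (n : ℕ) :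
    ∫ x, x ^ (n + 2) ∂gaussianReal 0 v = v * (n + 1) * ∫ x, x ^ n ∂gaussianReal 0 v := by
  rcases eq_or_ne v 0 with rfl | hv
  · simp
  have hint := integrable_gaussianPDFReal_mul_pow 0 hv
  have parts := integral_mul_deriv_eq_deriv_mul_of_integrable
    (u := fun x : ℝ => x ^ (n + 1)) (u' := fun x => (n + 1) * x ^ n)
    (v := gaussianPDFReal 0 v) (v' := fun x => -(x / v) * gaussianPDFReal 0 v x)
    (fun x _ => by simpa using hasDerivAt_pow (n + 1) x)
    (fun x _ => hasDerivAt_gaussianPDFReal_zero v x)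
    (((hint (n + 2)).const_mul (-(v : ℝ)⁻¹)).congr (.of_forall fun x => by simp; ring))
    (((hint n).const_mul (n + 1)).congr (.of_forall fun x => by simp; ring))
    ((hint (n + 1)).congr (.of_forall fun x => by simp; ring))
  simp only [integral_gaussianReal_eq_integral_smul hv, smul_eq_mul]
  calc ∫ x, gaussianPDFReal 0 v x * x ^ (n + 2)
      = -v * ∫ x, x ^ (n + 1) * (-(x / v) * gaussianPDFReal 0 v x) := by
        rw [← integral_const_mul]
        congr 1 with x
        field_simp [show (v : ℝ) ≠ 0 by exact_mod_cast hv]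
        ring
    _ = v * (n + 1) * ∫ x, gaussianPDFReal 0 v x * x ^ n := by
        rw [parts, neg_mul_neg, ← integral_const_mul, ← integral_const_mul]
        congr 1 with x
        ring

end GaussianMoments

lemma integral_finsetSum_finsetSum {α β Ω : Type*} [MeasurableSpace Ω] {μ : Measure Ω}
    (s : Finset α) (t : Finset β) {f : α → β → Ω → ℝ}
    (hf : ∀ a ∈ s, ∀ b ∈ t, Integrable (f a b) μ) :
    ∫ ω, ∑ a ∈ s, ∑ b ∈ t, f a b ω ∂μ = ∑ a ∈ s, ∑ b ∈ t, ∫ ω, f a b ω ∂μ := by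
  rw [integral_finsetSum _ fun a ha => integrable_finsetSum _ (hf a ha)]
  exact sum_congr rfl fun a ha => integral_finsetSum _ (hf a ha)

section Isserlis

variable {ι : Type*} [Fintype ι]

lemma integral_prod_pow_pi_gaussianReal (n : ι → ℕ) :
    ∫ x, ∏ i, x i ^ n i ∂(Measure.pi fun _ => gaussianReal 0 1) =
      ∏ i, ∫ t, t ^ n i ∂gaussianReal 0 1 :=
  integral_fintype_prod_eq_prod fun i t => t ^ n i

lemma integrable_prod_pow_pi_gaussianReal (n : ι → ℕ) :
    Integrable (fun x : ι → ℝ => ∏ i, x i ^ n i) (Measure.pi fun _ => gaussianReal 0 1) :=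
  Integrable.fintype_prod fun i => integrable_pow_gaussianReal 0 1 (n i)

lemma dotProduct_mul_mul_mul (u v w z x : ι → ℝ) :
    (u ⬝ᵥ x) * (v ⬝ᵥ x) * (w ⬝ᵥ x) * (z ⬝ᵥ x) =
      ∑ s, ∑ r, ∑ q, ∑ p, u p * v q * w r * z s * (x p * x q * x r * x s) := by
  simp only [dotProduct, mul_sum, sum_mul]
  exact sum_congr rfl fun _ _ => sum_congr rfl fun _ _ => sum_congr rfl fun _ _ =>
    sum_congr rfl fun _ _ => by ring

variable [DecidableEq ι]

lemma mul_mul_mul_eq_prod_pow_count (x : ι → ℝ) (p q r s : ι) :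
    x p * x q * x r * x s = ∏ i, x i ^ Multiset.count i {p, q, r, s} := by
  simp only [Multiset.insert_eq_cons, Multiset.count_cons, Multiset.count_singleton, pow_add,
    prod_mul_distrib, pow_ite, pow_one, pow_zero, prod_ite_eq', mem_univ, if_true]
  ring

lemma prod_apply_count_eq_sum_pairings (M : ℕ → ℝ) (h0 : M 0 = 1) (h1 : M 1 = 0)
    (h2 : M 2 = 1) (h3 : M 3 = 0) (h4 : M 4 = 3) (p q r s : ι) :
    ∏ i, M (Multiset.count i {p, q, r, s}) =
      (if p = q then 1 else 0) * (if r = s then 1 else 0) +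
        (if p = r then 1 else 0) * (if q = s then 1 else 0) +
        (if p = s then 1 else 0) * (if q = r then 1 else 0) := by
  rw [← prod_subset (subset_univ {p, q, r, s}) fun i _ hi => by
    rw [Multiset.count_eq_zero.mpr (by simpa using hi), h0]]
  by_cases hpq : p = q <;> by_cases hpr : p = r <;> by_cases hps : p = s <;>
    by_cases hqr : q = r <;> by_cases hqs : q = s <;> by_cases hrs : r = s <;>
    subst_vars <;>
    simp_all [Multiset.count_cons, eq_comm, one_add_one_eq_two, two_add_one_eq_three]

lemma integrable_coord_mul_mul_mul (p q r s : ι) :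
    Integrable (fun x : ι → ℝ => x p * x q * x r * x s)
      (Measure.pi fun _ => gaussianReal 0 1) := by
  simpa only [mul_mul_mul_eq_prod_pow_count] using integrable_prod_pow_pi_gaussianReal _

theorem integral_coord_mul_mul_mul (p q r s : ι) :
    ∫ x, x p * x q * x r * x s ∂(Measure.pi fun _ => gaussianReal 0 1) =
      (if p = q then 1 else 0) * (if r = s then 1 else 0) +
        (if p = r then 1 else 0) * (if q = s then 1 else 0) +
        (if p = s then 1 else 0) * (if q = r then 1 else 0) := by
  have moment (n : ℕ) :
      ∫ t, t ^ (n + 2) ∂gaussianReal 0 1 = (n + 1) * ∫ t, t ^ n ∂gaussianReal 0 1 := by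
    simpa using integral_pow_add_two_gaussianReal (v := 1) n
  have m0 : ∫ t, t ^ 0 ∂gaussianReal 0 1 = 1 := by simp
  have m1 : ∫ t, t ^ 1 ∂gaussianReal 0 1 = 0 := by simp
  have m2 : ∫ t, t ^ 2 ∂gaussianReal 0 1 = 1 := by simpa [m0] using moment 0
  have m3 : ∫ t, t ^ 3 ∂gaussianReal 0 1 = 0 := by simpa [m1] using moment 1
  have m4 : ∫ t, t ^ 4 ∂gaussianReal 0 1 = 3 := by norm_num [moment 2, m2]
  simp only [mul_mul_mul_eq_prod_pow_count, integral_prod_pow_pi_gaussianReal]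
  exact prod_apply_count_eq_sum_pairings (fun n => ∫ t, t ^ n ∂gaussianReal 0 1) m0 m1 m2 m3 m4
    p q r s

lemma integrable_dotProduct_mul_mul_mul (u v w z : ι → ℝ) :
    Integrable (fun x => (u ⬝ᵥ x) * (v ⬝ᵥ x) * (w ⬝ᵥ x) * (z ⬝ᵥ x))
      (Measure.pi fun _ => gaussianReal 0 1) := by
  simp only [dotProduct_mul_mul_mul]
  exact integrable_finsetSum _ fun s _ => integrable_finsetSum _ fun r _ =>
    integrable_finsetSum _ fun q _ => integrable_finsetSum _ fun p _ =>
      (integrable_coord_mul_mul_mul p q r s).const_mul _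

theorem integral_dotProduct_mul_mul_mul (u v w z : ι → ℝ) :
    ∫ x, (u ⬝ᵥ x) * (v ⬝ᵥ x) * (w ⬝ᵥ x) * (z ⬝ᵥ x) ∂(Measure.pi fun _ => gaussianReal 0 1) =
      (u ⬝ᵥ v) * (w ⬝ᵥ z) + (u ⬝ᵥ w) * (v ⬝ᵥ z) + (u ⬝ᵥ z) * (v ⬝ᵥ w) := by
  have hint (s r : ι) : Integrable
      (fun x : ι → ℝ => ∑ q, ∑ p, u p * v q * w r * z s * (x p * x q * x r * x s))
      (Measure.pi fun _ => gaussianReal 0 1) :=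
    integrable_finsetSum _ fun q _ => integrable_finsetSum _ fun p _ =>
      (integrable_coord_mul_mul_mul p q r s).const_mul _
  rw [mul_comm (u ⬝ᵥ v), mul_comm (u ⬝ᵥ w)]
  simp only [dotProduct_mul_mul_mul]
  rw [integral_finsetSum_finsetSum _ _ fun s _ r _ => hint s r]
  simp only [integral_finsetSum_finsetSum _ _ fun q _ p _ =>
      (integrable_coord_mul_mul_mul p q _ _).const_mul _,
    integral_const_mul, integral_coord_mul_mul_mul, mul_add, sum_add_distrib, mul_ite, mul_one,
    mul_zero, sum_ite_eq', sum_ite_irrel, sum_const_zero, mem_univ, if_true, dotProduct,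
    sum_mul_sum]
  ac_rfl

end Isserlis

lemma frobSq_mul_transpose {m n : Type*} [Fintype m] [Fintype n] (G : Matrix m n ℝ) :
    frobSq (G * Gᵀ) = ∑ i, ∑ j, ∑ d, ∑ e, G i d * G j d * G i e * G j e := by
  simp only [frobSq, mul_apply, transpose_apply, sq, sum_mul_sum, mul_assoc]

theorem integral_frobSq_mul_transpose_mul_gaussian {m n p : Type*} [Fintype m] [Fintype n]
    [Fintype p] (B : Matrix m n ℝ) :
    ∫ x : n × p → ℝ, frobSq ((B * of fun a d => x (a, d)) * (B * of fun a d => x (a, d))ᵀ)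
        ∂(Measure.pi fun _ => gaussianReal 0 1) =
      Fintype.card p * ∑ i, ∑ j,
        ((Fintype.card p + 1) * (B * Bᵀ) i j ^ 2 + (B * Bᵀ) i i * (B * Bᵀ) j j) := by
  classical
  -- The entries of `B * X` are the coordinates of `(B ⊗ₖ 1) *ᵥ x`, of covariance `(B Bᵀ) ⊗ₖ 1`.
  set K := B ⊗ₖ (1 : Matrix p p ℝ)
  have hentry (x : n × p → ℝ) (i : m) (d : p) :
      (B * of fun a d => x (a, d)) i d = K (i, d) ⬝ᵥ x := by
    simp [K, mul_apply, dotProduct, Fintype.sum_prod_type, one_apply]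
  have hcov (i j : m) (d e : p) :
      K (i, d) ⬝ᵥ K (j, e) = (B * Bᵀ) i j * (1 : Matrix p p ℝ) d e := by
    have hKK : K * Kᵀ = (B * Bᵀ) ⊗ₖ (1 : Matrix p p ℝ) := by
      rw [← kroneckerMap_transpose, transpose_one, ← mul_kronecker_mul, mul_one]
    exact mul_apply'.symm.trans (congrFun (congrFun hKK _) _)
  simp only [frobSq_mul_transpose, hentry]
  rw [integral_finsetSum_finsetSum _ _ fun i _ j _ => integrable_finsetSum _ fun d _ =>
    integrable_finsetSum _ fun e _ => integrable_dotProduct_mul_mul_mul _ _ _ _]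
  simp only [integral_finsetSum_finsetSum _ _ fun d _ e _ =>
      integrable_dotProduct_mul_mul_mul _ _ _ _,
    integral_dotProduct_mul_mul_mul, hcov]
  rw [mul_sum]
  refine sum_congr rfl fun i _ => ?_
  rw [mul_sum]
  refine sum_congr rfl fun j _ => ?_
  have hC : (B * Bᵀ) j i = (B * Bᵀ) i j := by simp only [mul_apply, transpose_apply, mul_comm]
  rw [hC]
  simp only [one_apply, ↓reduceIte, mul_one, mul_ite, mul_zero, ite_mul, zero_mul,
    sum_add_distrib, sum_const, card_univ, nsmul_eq_mul, sum_ite_eq, mem_univ]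
  ring

theorem expected_feature_correlation_gcn_general
    (N D k : ℕ)
    (A : Matrix (Fin N) (Fin N) ℝ) (hsymm : A.IsSymm) :
    (∫ x : (Fin N × Fin D) → ℝ,
        frobSq (((A + 1) ^ k * Matrix.of fun i j => x (i, j)) *
            ((A + 1) ^ k * Matrix.of fun i j => x (i, j))ᵀ)
        ∂(Measure.pi fun _ : Fin N × Fin D => gaussianReal 0 1)) =
      (D : ℝ) * ∑ i : Fin N, ∑ j : Fin N,
        (((D : ℝ) + 1) * (((A + 1) ^ (2 * k)) i j) ^ 2 +
          ((A + 1) ^ (2 * k)) i i * ((A + 1) ^ (2 * k)) j j) := by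
  have hpow : (A + 1) ^ (2 * k) = (A + 1) ^ k * ((A + 1) ^ k)ᵀ := by
    rw [((hsymm.add isSymm_one).pow k).eq, ← pow_add, two_mul]
  rw [hpow, integral_frobSq_mul_transpose_mul_gaussian, Fintype.card_fin]

/-- Theorem 3 (expectation formula): for `H^{(k)} = Ã^k X` with `Ã = A + I` and `X` an
`N × D` matrix of i.i.d. standard Gaussians,
`E[‖H^{(k)} H^{(k)ᵀ}‖_F²] = D Σ_{i,j} (D+1)((Ã^{2k})_{ij})² + (Ã^{2k})_{ii}(Ã^{2k})_{jj}`. -/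
theorem expected_feature_correlation_gcn
    (N D k : ℕ) (hN : 0 < N) (hD : 0 < D) (hk : 0 < k)
    (A : Matrix (Fin N) (Fin N) ℝ) (hsymm : A.IsSymm)
    (hdiag : ∀ i, A i i = 0) (h01 : ∀ i j, A i j = 0 ∨ A i j = 1) :
    (∫ x : (Fin N × Fin D) → ℝ,
        frobSq (((A + 1) ^ k * Matrix.of fun i j => x (i, j)) *
            ((A + 1) ^ k * Matrix.of fun i j => x (i, j))ᵀ)
        ∂(Measure.pi fun _ : Fin N × Fin D => gaussianReal 0 1)) =
      (D : ℝ) * ∑ i : Fin N, ∑ j : Fin N,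
        (((D : ℝ) + 1) * (((A + 1) ^ (2 * k)) i j) ^ 2 +
          ((A + 1) ^ (2 * k)) i i * ((A + 1) ^ (2 * k)) j j) :=
  expected_feature_correlation_gcn_general N D k A hsymm
end

section
/- Fix positive integers N, D. Let A be an N × N real matrix that is symmetric, has zero diagonal, and every entry equal to 0 or 1, and let Ã = A + I. Then the function k ↦ D · Σ_{i,j=1}^{N} [ (D+1) · ((Ã^{2k})_{ij})² + (Ã^{2k})_{ii} · (Ã^{2k})_{jj} ] is monotone nondecreasing on the natural numbers. -/
open Matrix

/-- Theorem 3 (monotonicity): for the self-loop-augmented adjacency matrix `Ã = A + I`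
of a simple graph, the Gaussian feature correlation
`k ↦ D Σ_{i,j} (D+1)((Ã^{2k})_{ij})² + (Ã^{2k})_{ii}(Ã^{2k})_{jj}`
is monotone nondecreasing in the number of layers `k`. -/
theorem feature_correlation_monotone
    (N D : ℕ) (hN : 0 < N) (hD : 0 < D)
    (A : Matrix (Fin N) (Fin N) ℝ) (hsymm : A.IsSymm)
    (hdiag : ∀ i, A i i = 0) (h01 : ∀ i j, A i j = 0 ∨ A i j = 1) :
    Monotone (fun k : ℕ =>
      (D : ℝ) * ∑ i : Fin N, ∑ j : Fin N,
        (((D : ℝ) + 1) * (((A + 1) ^ (2 * k)) i j) ^ 2 +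
          ((A + 1) ^ (2 * k)) i i * ((A + 1) ^ (2 * k)) j j)) := by
  set B : Matrix (Fin N) (Fin N) ℝ := A + 1 with hB
  have hBnn : ∀ i j, 0 ≤ B i j := by
    intro i j
    simp only [hB, Matrix.add_apply, Matrix.one_apply]
    rcases h01 i j with h | h <;> rw [h] <;> split <;> norm_num
  have hBdiag : ∀ i, 1 ≤ B i i := by
    intro i
    simp [hB, Matrix.add_apply, Matrix.one_apply, hdiag i]
  have hpow_nn : ∀ m : ℕ, ∀ i j, 0 ≤ (B ^ m) i j := by
    intro m
    induction m with
    | zero => intro i j; simp [Matrix.one_apply]; split <;> norm_num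
    | succ n ih =>
      intro i j
      rw [pow_succ, Matrix.mul_apply]
      exact Finset.sum_nonneg fun l _ => mul_nonneg (ih i l) (hBnn l j)
  have hB2diag : ∀ i, 1 ≤ (B ^ 2) i i := by
    intro i
    rw [pow_two, Matrix.mul_apply]
    calc (1 : ℝ) ≤ B i i * B i i := by nlinarith [hBdiag i]
      _ ≤ ∑ l, B i l * B l i :=
        Finset.single_le_sum (f := fun l => B i l * B l i)
          (fun l _ => mul_nonneg (hBnn i l) (hBnn l i)) (Finset.mem_univ i)
  have hstep : ∀ m : ℕ, ∀ i j, (B ^ m) i j ≤ (B ^ (m + 2)) i j := by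
    intro m i j
    have h2 : B ^ (m + 2) = B ^ 2 * B ^ m := by rw [add_comm, pow_add]
    rw [h2, Matrix.mul_apply]
    calc (B ^ m) i j ≤ (B ^ 2) i i * (B ^ m) i j := by
          nlinarith [hB2diag i, hpow_nn m i j]
      _ ≤ ∑ l, (B ^ 2) i l * (B ^ m) l j :=
        Finset.single_le_sum (f := fun l => (B ^ 2) i l * (B ^ m) l j)
          (fun l _ => mul_nonneg (hpow_nn 2 i l) (hpow_nn m l j)) (Finset.mem_univ i)
  apply monotone_nat_of_le_succ
  intro k
  have h2k : 2 * (k + 1) = 2 * k + 2 := by ring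
  rw [h2k]
  apply mul_le_mul_of_nonneg_left _ (by positivity : (0 : ℝ) ≤ D)
  apply Finset.sum_le_sum; intro i _
  apply Finset.sum_le_sum; intro j _
  have hD1 : (0 : ℝ) ≤ (D : ℝ) + 1 := by positivity
  apply add_le_add
  · apply mul_le_mul_of_nonneg_left _ hD1
    exact pow_le_pow_left₀ (hpow_nn _ i j) (hstep (2 * k) i j) 2
  · exact mul_le_mul (hstep (2 * k) i i) (hstep (2 * k) j j)
      (hpow_nn _ j j) (hpow_nn _ i i)
end

section
/- Let (𝒳, d_𝒳) be a metric space equipped with its Borel σ-algebra and (Y, d_Y) a metric space. Let μ_s and μ_t be probability measures on 𝒳 and γ a probability measure on 𝒳 × 𝒳 whose first marginal is μ_s and whose second marginal is μ_t (a coupling). Let h₀, h, h* : 𝒳 → Y all be Lipschitz with constant K, assume the functions x ↦ d_Y(h₀(x), h(x)), x ↦ d_Y(h₀(x), h*(x)), and x ↦ d_Y(h*(x), h(x)) are integrable with respect to μ_s and μ_t, and assume (x, x') ↦ d_𝒳(x, x') is integrable with respect to γ. Writing ε_s(g) = ∫ d_Y(h₀(x), g(x)) dμ_s(x) and ε_t(g)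 = ∫ d_Y(h₀(x), g(x)) dμ_t(x), it holds that ε_t(h) ≤ ε_s(h) + ε_s(h*) + ε_t(h*) + 2K · ∫ d_𝒳(x, x') dγ(x, x'). -/
open MeasureTheory

/-- Domain-adaptation bound in coupling form: for `K`-Lipschitz hypotheses `h₀, h, h*` and
a coupling `γ` of the source and target marginals `μ_s, μ_t`,
`ε_t(h) ≤ ε_s(h) + ε_s(h*) + ε_t(h*) + 2K · ∫ d_𝒳(x, x') dγ`. -/
theorem domain_adaptation_coupling_bound
    {𝒳 Y : Type*} [MetricSpace 𝒳] [MeasurableSpace 𝒳] [BorelSpace 𝒳] [MetricSpace Y]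
    (μs μt : Measure 𝒳) [IsProbabilityMeasure μs] [IsProbabilityMeasure μt]
    (γ : Measure (𝒳 × 𝒳)) [IsProbabilityMeasure γ]
    (hfst : γ.map Prod.fst = μs) (hsnd : γ.map Prod.snd = μt)
    (K : NNReal) (h₀ h hstar : 𝒳 → Y)
    (hh₀ : LipschitzWith K h₀) (hh : LipschitzWith K h) (hhstar : LipschitzWith K hstar)
    (int1s : Integrable (fun x => dist (h₀ x) (h x)) μs)
    (int1t : Integrable (fun x => dist (h₀ x) (h x)) μt)
    (int2s : Integrable (fun x => dist (h₀ x) (hstar x)) μs)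
    (int2t : Integrable (fun x => dist (h₀ x) (hstar x)) μt)
    (int3s : Integrable (fun x => dist (hstar x) (h x)) μs)
    (int3t : Integrable (fun x => dist (hstar x) (h x)) μt)
    (hd : Integrable (fun p : 𝒳 × 𝒳 => dist p.1 p.2) γ) :
    (∫ x, dist (h₀ x) (h x) ∂μt) ≤
      (∫ x, dist (h₀ x) (h x) ∂μs) + (∫ x, dist (h₀ x) (hstar x) ∂μs) +
        (∫ x, dist (h₀ x) (hstar x) ∂μt) +
        2 * (K : ℝ) * ∫ p : 𝒳 × 𝒳, dist p.1 p.2 ∂γ := by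
  set f : 𝒳 → ℝ := fun x => dist (hstar x) (h x) with hf
  have hfc : Continuous f := by
    exact (hhstar.continuous.dist hh.continuous)
  -- integrals along marginals
  have hmf : AEMeasurable (Prod.fst : 𝒳 × 𝒳 → 𝒳) γ := measurable_fst.aemeasurable
  have hms : AEMeasurable (Prod.snd : 𝒳 × 𝒳 → 𝒳) γ := measurable_snd.aemeasurable
  have hfs : (∫ x, f x ∂μs) = ∫ p : 𝒳 × 𝒳, f p.1 ∂γ := by
    rw [← hfst, integral_map hmf hfc.aestronglyMeasurable]
  have hft : (∫ x, f x ∂μt) = ∫ p : 𝒳 × 𝒳, f p.2 ∂γ := by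
    rw [← hsnd, integral_map hms hfc.aestronglyMeasurable]
  have hintfs : Integrable (fun p : 𝒳 × 𝒳 => f p.1) γ := by
    have := int3s; rw [← hfst] at this
    exact (integrable_map_measure hfc.aestronglyMeasurable hmf).mp this
  have hintft : Integrable (fun p : 𝒳 × 𝒳 => f p.2) γ := by
    have := int3t; rw [← hsnd] at this
    exact (integrable_map_measure hfc.aestronglyMeasurable hms).mp this
  -- pointwise Lipschitz bound
  have key : ∀ p : 𝒳 × 𝒳, f p.2 ≤ f p.1 + 2 * (K : ℝ) * dist p.1 p.2 := by
    intro p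
    have h1 : dist (hstar p.2) (h p.2) ≤
        dist (hstar p.2) (hstar p.1) + dist (hstar p.1) (h p.1) + dist (h p.1) (h p.2) :=
      dist_triangle4 _ _ _ _
    have h2 : dist (hstar p.2) (hstar p.1) ≤ (K : ℝ) * dist p.2 p.1 := hhstar.dist_le_mul _ _
    have h3 : dist (h p.1) (h p.2) ≤ (K : ℝ) * dist p.1 p.2 := hh.dist_le_mul _ _
    rw [dist_comm p.2 p.1] at h2
    simp only [hf]
    nlinarith [dist_nonneg (x := p.1) (y := p.2)]
  have step : (∫ x, f x ∂μt) ≤ (∫ x, f x ∂μs) + 2 * (K : ℝ) * ∫ p : 𝒳 × 𝒳, dist p.1 p.2 ∂γ := by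
    rw [hfs, hft, ← integral_const_mul, ← integral_add hintfs (hd.const_mul (2 * (K : ℝ)))]
    exact integral_mono hintft (hintfs.add (hd.const_mul _)) key
  -- triangle inequalities for error functions
  have t1 : (∫ x, dist (h₀ x) (h x) ∂μt) ≤ (∫ x, dist (h₀ x) (hstar x) ∂μt) + ∫ x, f x ∂μt := by
    rw [← integral_add int2t int3t]
    exact integral_mono int1t (int2t.add int3t) fun x => dist_triangle _ _ _
  have t2 : (∫ x, f x ∂μs) ≤ (∫ x, dist (h₀ x) (hstar x) ∂μs) + ∫ x, dist (h₀ x) (h x) ∂μs := by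
    rw [← integral_add int2s int1s]
    refine integral_mono int3s (int2s.add int1s) fun x => ?_
    simpa [dist_comm (hstar x) (h₀ x)] using dist_triangle (hstar x) (h₀ x) (h x)
  linarith
end
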